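/- arXiv:2208.06927 — 3 statements merged into one kernel-verified Lean document; each statement's English description precedes it below -/
import Mathlib

section
/- Let S be a spanning tree of a connected weighted graph G. S is a maximal (maximum-weight) spanning tree if and only if for every edge e of G not in S, the weight of e is less than or equal to the weight of every edge on the unique cycle formed by adding e to S. -/
open SimpleGraph
open scoped Classical

/-!
Everything rests on edge exchange. Deleting an edge `s(a, b)` from a tree splits the vertices
into the side of `a` and the side of `b`; adding back any edge joining the two sides gives a
tree again, and for a tree path from `u` to `v` each of its edges separates `u` from `v`.

If `S` is maximal, exchanging an edge `f` of the `S`-path from `u` to `v` for `s(u, v)` yields a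
spanning tree of weight `w(S) - w f + w s(u, v) ≤ w(S)`. Conversely, for a spanning tree `T` and
an edge `s(u, v)` of `T` outside `S`, the `S`-path from `u` to `v` has an edge crossing the cut of
`s(u, v)` in `T`; exchanging the two does not decrease the weight by the cycle condition and
brings `T` closer to `S`, so induction on `T \ S` gives `w(T) ≤ w(S)`.
-/

namespace SimpleGraph

variable {V : Type*} {G S T : SimpleGraph V}

theorem Connected.reachable_deleteEdges_or (hG : G.Connected) (a b x : V) :
    (G.deleteEdges {s(a, b)}).Reachable x a ∨ (G.deleteEdges {s(a, b)}).Reachable x b := by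
  by_contra hx
  obtain ⟨d, -, hd, hd'⟩ := (hG a x).some.exists_boundary_dart
    {y | (G.deleteEdges {s(a, b)}).Reachable y a ∨ (G.deleteEdges {s(a, b)}).Reachable y b}
    (.inl .rfl) hx
  by_cases he : d.edge = s(a, b)
  · rcases Sym2.eq_iff.mp he with ⟨-, h⟩ | ⟨-, h⟩
    · exact hd' (.inr (h ▸ .rfl))
    · exact hd' (.inl (h ▸ .rfl))
  · have hadj : (G.deleteEdges {s(a, b)}).Adj d.snd d.fst := by
      rw [deleteEdges_adj, Set.mem_singleton_iff, Sym2.eq_swap]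
      exact ⟨d.adj.symm, he⟩
    exact hd' (hd.imp hadj.reachable.trans hadj.reachable.trans)

theorem IsTree.not_reachable_deleteEdges_of_mem_edges (hT : T.IsTree) {u v : V} {p : T.Walk u v}
    (hp : p.IsPath) {e : Sym2 V} (he : e ∈ p.edges) : ¬ (T.deleteEdges {e}).Reachable u v := by
  rintro ⟨q⟩
  let q' : T.Walk u v := q.mapLe (deleteEdges_le _)
  have hpq : (q'.toPath : T.Walk u v) = p := (hT.existsUnique_path u v).unique q'.toPath.2 hp
  have heq : e ∈ q.edges := by
    simpa [q'] using q'.edges_toPath_subset_edges (hpq ▸ he)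
  simpa using q.edges_subset_edgeSet heq

theorem IsTree.exists_reachable_deleteEdges_of_mem_edges (hT : T.IsTree) {u v : V}
    {p : T.Walk u v} (hp : p.IsPath) {e : Sym2 V} (he : e ∈ p.edges) :
    ∃ a b, e = s(a, b) ∧ (T.deleteEdges {e}).Reachable u a ∧
      (T.deleteEdges {e}).Reachable v b := by
  obtain ⟨a, b⟩ := e
  have huv := hT.not_reachable_deleteEdges_of_mem_edges hp he
  rcases hT.connected.reachable_deleteEdges_or a b u with hu | hu <;>
    rcases hT.connected.reachable_deleteEdges_or a b v with hv | hv
  · exact absurd (hu.trans hv.symm) huv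
  · exact ⟨a, b, rfl, hu, hv⟩
  · exact ⟨b, a, Sym2.eq_swap, hu, hv⟩
  · exact absurd (hu.trans hv.symm) huv

theorem IsTree.deleteEdges_sup_edge (hT : T.IsTree) {a b u v : V} (hab : T.Adj a b)
    (hua : (T.deleteEdges {s(a, b)}).Reachable u a)
    (hvb : (T.deleteEdges {s(a, b)}).Reachable v b) :
    (T.deleteEdges {s(a, b)} ⊔ edge u v).IsTree := by
  have hnab : ¬ (T.deleteEdges {s(a, b)}).Reachable a b :=
    isAcyclic_iff_forall_adj_isBridge.mp hT.isAcyclic hab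
  have hnuv : ¬ (T.deleteEdges {s(a, b)}).Reachable u v :=
    fun h ↦ hnab (hua.symm.trans (h.trans hvb))
  have hle : T.deleteEdges {s(a, b)} ≤ T.deleteEdges {s(a, b)} ⊔ edge u v := le_sup_left
  have hne : u ≠ v := by rintro rfl; exact hnuv .rfl
  have hvu : (T.deleteEdges {s(a, b)} ⊔ edge u v).Reachable v u :=
    (Adj.reachable (by simp [edge_adj, hne])).symm
  refine ⟨(connected_iff_exists_forall_reachable _).mpr ⟨u, fun x ↦ ?_⟩,
    (hT.isAcyclic.anti (deleteEdges_le _)).sup_edge_of_not_reachable hnuv⟩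
  rcases hT.connected.reachable_deleteEdges_or a b x with hx | hx
  · exact ((hx.trans hua.symm).mono hle).symm
  · exact (((hx.trans hvb.symm).mono hle).trans hvu).symm

theorem Walk.exists_dart_reachable_deleteEdges {H : SimpleGraph V} (hT : T.Connected) {u v : V}
    (huv : ¬ (T.deleteEdges {s(u, v)}).Reachable u v) (p : H.Walk u v) :
    ∃ d ∈ p.darts, (T.deleteEdges {s(u, v)}).Reachable d.fst u ∧
      (T.deleteEdges {s(u, v)}).Reachable d.snd v := by
  obtain ⟨d, hd, hdu, hdv⟩ := p.exists_boundary_dart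
    {x | (T.deleteEdges {s(u, v)}).Reachable x u} .rfl (fun h ↦ huv h.symm)
  exact ⟨d, hd, hdu, (hT.reachable_deleteEdges_or u v d.snd).resolve_left hdv⟩

theorem IsTree.exists_dart_isTree_deleteEdges_sup_edge (hT : T.IsTree) {u v : V}
    (hTuv : T.Adj u v) (hSuv : ¬ S.Adj u v) (p : S.Walk u v) :
    ∃ d ∈ p.darts, ¬ T.Adj d.fst d.snd ∧
      (T.deleteEdges {s(u, v)} ⊔ edge d.fst d.snd).IsTree := by
  have huv : ¬ (T.deleteEdges {s(u, v)}).Reachable u v :=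
    isAcyclic_iff_forall_adj_isBridge.mp hT.isAcyclic hTuv
  obtain ⟨d, hd, hdu, hdv⟩ := p.exists_dart_reachable_deleteEdges hT.connected huv
  refine ⟨d, hd, fun hTd ↦ huv ?_, hT.deleteEdges_sup_edge hTuv hdu hdv⟩
  have hd_ne : s(d.fst, d.snd) ≠ s(u, v) := fun h ↦
    hSuv (by rw [← mem_edgeSet, ← h]; exact d.adj)
  have hadj : (T.deleteEdges {s(u, v)}).Adj d.fst d.snd := by simp [hTd, hd_ne]
  exact hdu.symm.trans (hadj.reachable.trans hdv)

theorem deleteEdges_sup_edge_sdiff_lt {a b u v : V} (hTuv : T.Adj u v)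
    (hSuv : ¬ S.Adj u v) (hSab : S.Adj a b) :
    (T.deleteEdges {s(u, v)} ⊔ edge a b) \ S < T \ S := by
  rw [sup_sdiff, sdiff_eq_bot_iff.mpr (S.edge_le_iff.mpr (.inr hSab)), sup_bot_eq]
  refine lt_of_le_of_ne (sdiff_le_sdiff_right (deleteEdges_le _)) fun h ↦ ?_
  have := congrArg (·.Adj u v) h
  simp [hTuv, hSuv] at this

noncomputable def weight [Fintype V] {M : Type*} [AddCommMonoid M] (G : SimpleGraph V)
    (w : Sym2 V → M) : M :=
  ∑ e ∈ G.edgeFinset, w e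

theorem weight_deleteEdges_sup_edge_add [Fintype V] {M : Type*} [AddCommMonoid M]
    (w : Sym2 V → M) {a b u v : V} (hab : G.Adj a b) (huv : ¬ G.Adj u v) (hne : u ≠ v) :
    (G.deleteEdges {s(a, b)} ⊔ edge u v).weight w + w s(a, b) = G.weight w + w s(u, v) := by
  -- Quantified over the instance, so that `rw` matches the one inside `weight`.
  have hsup : ∀ _ : Fintype (G.deleteEdges {s(a, b)} ⊔ edge u v).edgeSet,
      (G.deleteEdges {s(a, b)} ⊔ edge u v).edgeFinset =
        insert s(u, v) (G.edgeFinset.erase s(a, b)) := by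
    intro
    ext e
    simp only [mem_edgeFinset, edgeSet_sup, edgeSet_deleteEdges, edgeSet_edge_of_ne hne,
      Finset.mem_insert, Finset.mem_erase, Set.mem_union, Set.mem_sdiff, Set.mem_singleton_iff]
    tauto
  have huv' : s(u, v) ∉ G.edgeFinset.erase s(a, b) := by simp [huv]
  rw [weight, weight, hsup, Finset.sum_insert huv', add_assoc,
    Finset.sum_erase_add _ _ (by simpa using hab), add_comm]

theorem IsTree.le_of_mem_edges_of_forall_weight_le [Fintype V] {M : Type*} [AddCommMonoid M]
    [PartialOrder M] [IsOrderedCancelAddMonoid M] (w : Sym2 V → M) (hS : S.IsTree)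
    (hSG : S ≤ G)
    (hmax : ∀ T : SimpleGraph V, T ≤ G → T.IsTree → T.weight w ≤ S.weight w)
    {u v : V} (hGuv : G.Adj u v) (hSuv : ¬ S.Adj u v) {p : S.Walk u v} (hp : p.IsPath)
    {f : Sym2 V} (hf : f ∈ p.edges) : w s(u, v) ≤ w f := by
  obtain ⟨a, b, rfl, hua, hvb⟩ := hS.exists_reachable_deleteEdges_of_mem_edges hp hf
  have hab := p.adj_of_mem_edges hf
  have hTG : S.deleteEdges {s(a, b)} ⊔ edge u v ≤ G :=
    sup_le ((deleteEdges_le _).trans hSG) (G.edge_le_iff.mpr (.inr hGuv))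
  refine le_of_add_le_add_left (a := S.weight w) ?_
  calc S.weight w + w s(u, v)
      = (S.deleteEdges {s(a, b)} ⊔ edge u v).weight w + w s(a, b) :=
        (weight_deleteEdges_sup_edge_add w hab hSuv hGuv.ne).symm
    _ ≤ S.weight w + w s(a, b) := by
        gcongr
        exact hmax _ hTG (hS.deleteEdges_sup_edge hab hua hvb)

theorem IsTree.weight_le_of_forall_mem_edges_le [Fintype V] {M : Type*} [AddCommMonoid M]
    [PartialOrder M] [IsOrderedCancelAddMonoid M] (w : Sym2 V → M) (hS : S.IsTree)
    (hSG : S ≤ G) (hcyc : ∀ u v : V, G.Adj u v → ¬ S.Adj u v →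
      ∀ p : S.Walk u v, p.IsPath → ∀ f ∈ p.edges, w s(u, v) ≤ w f)
    (T : SimpleGraph V) (hTG : T ≤ G) (hT : T.IsTree) : T.weight w ≤ S.weight w := by
  induction T using (InvImage.wf (· \ S) wellFounded_lt).induction with | _ T ih
  by_cases hTS : T ≤ S
  · rw [(isTree_iff_minimal_connected.mp hS).eq_of_le hT.connected hTS]
  obtain ⟨u, v, hTuv, hSuv⟩ : ∃ u v, T.Adj u v ∧ ¬ S.Adj u v := by
    by_contra! h
    exact hTS fun u v ↦ h u v
  obtain ⟨p, hp, -⟩ := hS.existsUnique_path u v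
  obtain ⟨d, hd, hTd, hT'⟩ := hT.exists_dart_isTree_deleteEdges_sup_edge hTuv hSuv p
  have hT'G : T.deleteEdges {s(u, v)} ⊔ edge d.fst d.snd ≤ G :=
    sup_le ((deleteEdges_le _).trans hTG) (G.edge_le_iff.mpr (.inr (hSG d.adj)))
  have hw : w s(u, v) ≤ w s(d.fst, d.snd) :=
    hcyc u v (hTG hTuv) hSuv p hp _ (List.mem_map_of_mem hd)
  have hTT' : T.weight w + w s(d.fst, d.snd) ≤
      (T.deleteEdges {s(u, v)} ⊔ edge d.fst d.snd).weight w + w s(d.fst, d.snd) := by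
    rw [← weight_deleteEdges_sup_edge_add w hTuv hTd d.adj.ne]
    gcongr
  exact (le_of_add_le_add_right hTT').trans
    (ih _ (deleteEdges_sup_edge_sdiff_lt hTuv hSuv d.adj) hT'G hT')

end SimpleGraph

theorem maximal_spanningTree_iff_general {V : Type*} [Fintype V] (G S : SimpleGraph V)
    (w : Sym2 V → ℝ) (hSG : S ≤ G) (hS : S.IsTree) :
    (∀ T : SimpleGraph V, T ≤ G → T.IsTree →
        ∑ e ∈ T.edgeFinset, w e ≤ ∑ e ∈ S.edgeFinset, w e) ↔
    (∀ u v : V, G.Adj u v → ¬ S.Adj u v →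
        ∀ p : S.Walk u v, p.IsPath → ∀ f ∈ p.edges, w s(u, v) ≤ w f) :=
  ⟨fun hmax _ _ hGuv hSuv _ hp _ hf ↦
      hS.le_of_mem_edges_of_forall_weight_le w hSG hmax hGuv hSuv hp hf,
    hS.weight_le_of_forall_mem_edges_le w hSG⟩

/-- A spanning tree `S` of a connected weighted graph `G` is a maximum-weight spanning
tree iff every non-tree edge has weight at most the weight of every edge on the unique
cycle formed by adding it to `S` (equivalently, every edge of the unique tree path
between its endpoints). -/
theorem maximal_spanningTree_iff {V : Type*} [Fintype V] (G S : SimpleGraph V)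
    (w : Sym2 V → ℝ) (hG : G.Connected) (hSG : S ≤ G) (hS : S.IsTree) :
    (∀ T : SimpleGraph V, T ≤ G → T.IsTree →
        ∑ e ∈ T.edgeFinset, w e ≤ ∑ e ∈ S.edgeFinset, w e) ↔
    (∀ u v : V, G.Adj u v → ¬ S.Adj u v →
        ∀ p : S.Walk u v, p.IsPath → ∀ f ∈ p.edges, w s(u, v) ≤ w f) :=
  maximal_spanningTree_iff_general G S w hSG hS
end

section
/- Let S be a maximal spanning tree of a connected weighted graph G. For any threshold t, the connected components of the subgraph of S consisting of edges of weight ≥ t coincide with the connected components of the Edge complex Edge(t) of G (restricted to vertices). -/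
/-! Cycle property: if `G.Adj a b` and `e` lies on the path from `a` to `b` in the maximum-weight
spanning tree `S`, then `w s(a, b) ≤ w e`, for otherwise exchanging `e` for `s(a, b)` yields a
spanning tree of larger weight. So the endpoints of every edge of `Edge(t)` are joined by a path in
`S` all of whose edges have weight `≥ t`; the converse inclusion is just `S ≤ G`. -/

open SimpleGraph
open scoped Classical

namespace SimpleGraph

variable {V : Type*} {G H S : SimpleGraph V}

theorem Reachable.of_forall_adj (h : ∀ ⦃x y⦄, G.Adj x y → H.Reachable x y) {u v : V}
    (huv : G.Reachable u v) : H.Reachable u v := by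
  simp only [reachable_iff_reflTransGen] at h huv ⊢
  exact huv.lift' id h

theorem Reachable.of_deleteEdges_le {u v c d : V} (huv : S.Reachable u v)
    (hle : S.deleteEdges {s(c, d)} ≤ H) (hcd : H.Reachable c d) : H.Reachable u v :=
  huv.of_forall_adj fun x y hxy ↦ by
    by_cases he : s(x, y) = s(c, d)
    · rcases Sym2.eq_iff.mp he with ⟨rfl, rfl⟩ | ⟨rfl, rfl⟩
      exacts [hcd, hcd.symm]
    · exact (hle (deleteEdges_adj.mpr ⟨hxy, he⟩)).reachable

-- A trail crosses the bridge only once, so its ends lie on opposite sides of it.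
theorem Walk.IsTrail.reachable_deleteEdges_of_isBridge {a b c d : V} {p : S.Walk a b}
    (hp : p.IsTrail) (hbr : S.IsBridge s(c, d)) (he : s(c, d) ∈ p.edges) :
    (S.deleteEdges {s(c, d)}).Reachable a c ∧ (S.deleteEdges {s(c, d)}).Reachable b d ∨
      (S.deleteEdges {s(c, d)}).Reachable a d ∧ (S.deleteEdges {s(c, d)}).Reachable b c := by
  set D := S.deleteEdges {s(c, d)}
  have hd : D.Reachable a d ∨ D.Reachable b d := by
    by_contra! h
    exact hp.not_mem_edges_of_not_reachable h.1 h.2 he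
  have hc : D.Reachable a c ∨ D.Reachable b c := by
    by_contra! h
    have := hp.not_mem_edges_of_not_reachable (x := d) (y := c)
    rw [Sym2.eq_swap] at this
    exact this h.1 h.2 he
  rw [isBridge_iff] at hbr
  rcases hc with hac | hbc <;> rcases hd with had | hbd
  · exact absurd (hac.symm.trans had) hbr
  · exact .inl ⟨hac, hbd⟩
  · exact .inr ⟨had, hbc⟩
  · exact absurd (hbc.symm.trans hbd) hbr

theorem IsTree.not_reachable_deleteEdges_of_mem_edges_s14 (hS : S.IsTree) {a b c d : V}
    {p : S.Walk a b} (hp : p.IsTrail) (he : s(c, d) ∈ p.edges) :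
    ¬ (S.deleteEdges {s(c, d)}).Reachable a b := by
  have hbr := isAcyclic_iff_forall_isBridge.mp hS.isAcyclic (p.edges_subset_edgeSet he)
  intro hab
  apply isBridge_iff.mp hbr
  rcases hp.reachable_deleteEdges_of_isBridge hbr he with ⟨hac, hbd⟩ | ⟨had, hbc⟩
  exacts [hac.symm.trans (hab.trans hbd), hbc.symm.trans (hab.symm.trans had)]

theorem IsTree.isTree_deleteEdges_sup_edge (hS : S.IsTree) {a b c d : V}
    {p : S.Walk a b} (hp : p.IsTrail) (he : s(c, d) ∈ p.edges) :
    (S.deleteEdges {s(c, d)} ⊔ edge a b).IsTree := by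
  have hbr := isAcyclic_iff_forall_isBridge.mp hS.isAcyclic (p.edges_subset_edgeSet he)
  have hab := hS.not_reachable_deleteEdges_of_mem_edges_s14 hp he
  have hne : a ≠ b := by
    rintro rfl
    exact hab .rfl
  have hab' : (S.deleteEdges {s(c, d)} ⊔ edge a b).Reachable a b :=
    Adj.reachable (.inr <| (edge_adj ..).mpr ⟨.inl ⟨rfl, rfl⟩, hne⟩)
  have hcd : (S.deleteEdges {s(c, d)} ⊔ edge a b).Reachable c d := by
    rcases hp.reachable_deleteEdges_of_isBridge hbr he with ⟨hac, hbd⟩ | ⟨had, hbc⟩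
    · exact (hac.mono le_sup_left).symm.trans (hab'.trans (hbd.mono le_sup_left))
    · exact (hbc.mono le_sup_left).symm.trans (hab'.symm.trans (had.mono le_sup_left))
  have := hS.connected.nonempty
  exact ⟨⟨fun x y ↦ (hS.connected.preconnected x y).of_deleteEdges_le le_sup_left hcd⟩,
    (hS.isAcyclic.anti (deleteEdges_le _)).sup_edge_of_not_reachable hab⟩

theorem sum_edgeFinset_deleteEdges_sup_edge {M : Type*} [AddCommGroup M] (w : Sym2 V → M)
    {a b c d : V} [Fintype S.edgeSet] [Fintype (S.deleteEdges {s(c, d)} ⊔ edge a b).edgeSet]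
    (hcd : s(c, d) ∈ S.edgeSet) (hab : ¬ (S.deleteEdges {s(c, d)}).Adj a b) (hne : a ≠ b) :
    ∑ e ∈ (S.deleteEdges {s(c, d)} ⊔ edge a b).edgeFinset, w e =
      ∑ e ∈ S.edgeFinset, w e - w s(c, d) + w s(a, b) := by
  have hT : (S.deleteEdges {s(c, d)} ⊔ edge a b).edgeFinset =
      insert s(a, b) (S.edgeFinset.erase s(c, d)) := by
    ext e
    simp [edgeSet_edge_of_ne hne, and_comm]
  have hab' : s(a, b) ∉ S.edgeFinset.erase s(c, d) := by
    simpa [and_comm] using hab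
  rw [hT, Finset.sum_insert hab', Finset.sum_erase_eq_sub (mem_edgeFinset.mpr hcd), add_comm]

variable [Fintype V]

def IsMaxWeightSpanningTree (S G : SimpleGraph V) (w : Sym2 V → ℝ) : Prop :=
  S ≤ G ∧ S.IsTree ∧
    ∀ T ≤ G, T.IsTree → ∑ e ∈ T.edgeFinset, w e ≤ ∑ e ∈ S.edgeFinset, w e

theorem IsMaxWeightSpanningTree.weight_le_of_mem_edges {w : Sym2 V → ℝ}
    (hS : S.IsMaxWeightSpanningTree G w) {a b : V} (hab : G.Adj a b) {p : S.Walk a b}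
    (hp : p.IsTrail) {e : Sym2 V} (he : e ∈ p.edges) : w s(a, b) ≤ w e := by
  obtain ⟨hSG, hS, hmax⟩ := hS
  induction e using Sym2.ind with | _ c d => ?_
  by_contra! hlt
  have hTG : S.deleteEdges {s(c, d)} ⊔ edge a b ≤ G :=
    sup_le ((deleteEdges_le _).trans hSG) ((edge_le_iff G).mpr (.inr hab))
  have : ∑ e ∈ S.edgeFinset, w e - w s(c, d) + w s(a, b) ≤ ∑ e ∈ S.edgeFinset, w e := by
    convert hmax _ hTG (hS.isTree_deleteEdges_sup_edge hp he) using 1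
    -- `convert` reconciles the two `Fintype` instances on the exchanged tree's edge set.
    convert (sum_edgeFinset_deleteEdges_sup_edge w (p.edges_subset_edgeSet he)
      (fun h ↦ hS.not_reachable_deleteEdges_of_mem_edges_s14 hp he h.reachable) hab.ne).symm
  linarith

end SimpleGraph

theorem maximal_spanningTree_edgeComplex_components_general {V : Type*} [Fintype V]
    (G S : SimpleGraph V) (w : Sym2 V → ℝ) (hSG : S ≤ G)
    (hS : S.IsTree)
    (hmax : ∀ T : SimpleGraph V, T ≤ G → T.IsTree →
        ∑ e ∈ T.edgeFinset, w e ≤ ∑ e ∈ S.edgeFinset, w e)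
    (t : ℝ) (u v : V) :
    (SimpleGraph.fromEdgeSet {e ∈ S.edgeSet | t ≤ w e}).Reachable u v ↔
      (SimpleGraph.fromEdgeSet {e ∈ G.edgeSet | t ≤ w e}).Reachable u v := by
  have hmst : S.IsMaxWeightSpanningTree G w := ⟨hSG, hS, hmax⟩
  refine ⟨fun h ↦ h.mono (fromEdgeSet_mono fun e he ↦ ⟨edgeSet_mono hSG he.1, he.2⟩),
    fun h ↦ h.of_forall_adj fun a b hab ↦ ?_⟩
  obtain ⟨⟨habG, ht⟩, -⟩ := (fromEdgeSet_adj _).mp hab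
  obtain ⟨p, hp⟩ := hS.connected.preconnected.exists_isPath a b
  refine (p.transfer _ fun e he ↦ ?_).reachable
  have heS := p.edges_subset_edgeSet he
  rw [edgeSet_fromEdgeSet]
  exact ⟨⟨heS, ht.trans (hmst.weight_le_of_mem_edges habG hp.isTrail he)⟩,
    S.not_isDiag_of_mem_edgeSet heS⟩

/-- For a maximum-weight spanning tree `S` of a connected weighted graph `G` and any
threshold `t`, the connected components of the subgraph of `S` with edges of weight `≥ t`
coincide with those of the edge complex `Edge(t)` of `G`. -/
theorem maximal_spanningTree_edgeComplex_components {V : Type*} [Fintype V]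
    (G S : SimpleGraph V) (w : Sym2 V → ℝ) (hG : G.Connected) (hSG : S ≤ G)
    (hS : S.IsTree)
    (hmax : ∀ T : SimpleGraph V, T ≤ G → T.IsTree →
        ∑ e ∈ T.edgeFinset, w e ≤ ∑ e ∈ S.edgeFinset, w e)
    (t : ℝ) (u v : V) :
    (SimpleGraph.fromEdgeSet {e ∈ S.edgeSet | t ≤ w e}).Reachable u v ↔
      (SimpleGraph.fromEdgeSet {e ∈ G.edgeSet | t ≤ w e}).Reachable u v :=
  maximal_spanningTree_edgeComplex_components_general G S w hSG hS hmax t u v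
end

section
/- For any two vertices u, v of a connected weighted graph G, the maximum over all u–v paths of the minimum edge weight along the path is achieved by the unique u–v path in any maximal spanning tree of G. -/
/-!
Suppose an edge `ab` of the tree path `p` were lighter than `c`. Deleting `ab` splits the tree
into the part reachable from `a` and the part reachable from `b`, and since `p` crosses `ab`
exactly once, `u` and `v` lie in different parts. The walk `q` must therefore cross between the
parts along some edge `xy` with `w xy ≥ c > w ab`, and exchanging `ab` for `xy` yields a spanning
tree of larger weight.
-/

open SimpleGraph
open scoped Classical

namespace SimpleGraph

variable {V : Type*} {G : SimpleGraph V}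

theorem Reachable.deleteEdges_left_or_right {a b z : V} (h : G.Reachable a z) :
    (G.deleteEdges {s(a, b)}).Reachable a z ∨ (G.deleteEdges {s(a, b)}).Reachable b z := by
  rw [reachable_iff_reflTransGen] at h
  induction h with
  | refl => exact .inl .rfl
  | @tail x y _ hxy ih =>
    by_cases he : s(x, y) = s(a, b)
    · rcases Sym2.eq_iff.mp he with ⟨-, rfl⟩ | ⟨-, rfl⟩
      · exact .inr .rfl
      · exact .inl .rfl
    · have hxy' : (G.deleteEdges {s(a, b)}).Adj x y := by simp [hxy, he]
      exact ih.imp (·.trans hxy'.reachable) (·.trans hxy'.reachable)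

theorem Walk.IsTrail.reachable_deleteEdges_iff_not_reachable {a b u v : V} {p : G.Walk u v}
    (hp : p.IsTrail) (hb : G.IsBridge s(a, b)) (he : s(a, b) ∈ p.edges) :
    (G.deleteEdges {s(a, b)}).Reachable a u ↔ ¬ (G.deleteEdges {s(a, b)}).Reachable a v := by
  have hb' : ¬ (G.deleteEdges {s(a, b)}).Reachable a b := isBridge_iff.mp hb
  have hub :
      (G.deleteEdges {s(a, b)}).Reachable u b ∨ (G.deleteEdges {s(a, b)}).Reachable v b := by
    by_contra! h
    exact hp.not_mem_edges_of_not_reachable h.1 h.2 he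
  have hua :
      (G.deleteEdges {s(a, b)}).Reachable u a ∨ (G.deleteEdges {s(a, b)}).Reachable v a := by
    by_contra! h
    rw [Sym2.eq_swap] at he h
    exact hp.not_mem_edges_of_not_reachable h.1 h.2 he
  constructor
  · intro hau hav
    rcases hub with h | h
    · exact hb' (hau.trans h)
    · exact hb' (hav.trans h)
  · intro hav
    exact (hua.resolve_right (fun h => hav h.symm)).symm

theorem Walk.exists_mem_edges_of_iff_not {u v : V} (q : G.Walk u v) {P : V → Prop}
    (h : P u ↔ ¬ P v) : ∃ x y, s(x, y) ∈ q.edges ∧ P x ∧ ¬ P y := by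
  by_cases hu : P u
  · obtain ⟨d, hd, hx, hy⟩ := q.exists_boundary_dart {x | P x} hu (h.mp hu)
    exact ⟨d.fst, d.snd, List.mem_map_of_mem (f := Dart.edge) hd, hx, hy⟩
  · obtain ⟨d, hd, hx, hy⟩ :=
      q.reverse.exists_boundary_dart {x | P x} (not_not.mp (mt h.mpr hu)) hu
    have hd' : d.edge ∈ q.reverse.edges := List.mem_map_of_mem hd
    rw [Walk.edges_reverse, List.mem_reverse] at hd'
    exact ⟨d.fst, d.snd, hd', hx, hy⟩

theorem IsTree.deleteEdges_sup_edge_s15 {a b x y : V} (hG : G.IsTree) (hab : G.Adj a b)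
    (hx : (G.deleteEdges {s(a, b)}).Reachable a x) (hy : (G.deleteEdges {s(a, b)}).Reachable b y) :
    (G.deleteEdges {s(a, b)} ⊔ edge x y).IsTree := by
  have hb : ¬ (G.deleteEdges {s(a, b)}).Reachable a b :=
    isBridge_iff.mp (isAcyclic_iff_forall_adj_isBridge.mp hG.isAcyclic hab)
  refine ⟨(connected_iff_exists_forall_reachable _).mpr ⟨a, fun z => ?_⟩, ?_⟩
  · have hle : G.deleteEdges {s(a, b)} ≤ G.deleteEdges {s(a, b)} ⊔ edge x y := le_sup_left
    rcases (hG.connected.preconnected a z).deleteEdges_left_or_right (b := b) with h | h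
    · exact h.mono hle
    · have hne : x ≠ y := fun hxy => hb (hx.trans (hxy ▸ hy.symm))
      have hxy : (G.deleteEdges {s(a, b)} ⊔ edge x y).Adj x y :=
        Or.inr ((edge_adj ..).mpr ⟨.inl ⟨rfl, rfl⟩, hne⟩)
      exact (hx.mono hle).trans (hxy.reachable.trans ((hy.symm.trans h).mono hle))
  · exact (hG.isAcyclic.anti (deleteEdges_le _)).sup_edge_of_not_reachable
      fun hxy => hb (hx.trans (hxy.trans hy.symm))

theorem sum_edgeFinset_deleteEdges_sup_edge_s15 {M : Type*} [AddCommGroup M] {e : Sym2 V} {x y : V}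
    [Fintype G.edgeSet] [Fintype (G.deleteEdges {e} ⊔ edge x y).edgeSet] (w : Sym2 V → M)
    (he : e ∈ G.edgeSet) (hxy : x ≠ y) (hn : ¬ (G.deleteEdges {e}).Adj x y) :
    ∑ f ∈ (G.deleteEdges {e} ⊔ edge x y).edgeFinset, w f =
      ∑ f ∈ G.edgeFinset, w f - w e + w s(x, y) := by
  have hxy_mem : s(x, y) ∉ G.edgeFinset.erase e := by
    simpa [and_comm, eq_comm (a := e)] using hn
  have hedges :
      (G.deleteEdges {e} ⊔ edge x y).edgeFinset = insert s(x, y) (G.edgeFinset.erase e) := by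
    ext f
    simp [edgeSet_deleteEdges, edgeSet_edge_of_ne hxy, and_comm]
  rw [hedges, Finset.sum_insert hxy_mem, Finset.sum_erase_eq_sub (by simpa using he)]
  abel

end SimpleGraph

theorem maximal_spanningTree_bottleneck_general {V : Type*} [Fintype V] (G S : SimpleGraph V)
    (w : Sym2 V → ℝ) (hSG : S ≤ G) (hS : S.IsTree)
    (hmax : ∀ T : SimpleGraph V, T ≤ G → T.IsTree →
        ∑ e ∈ T.edgeFinset, w e ≤ ∑ e ∈ S.edgeFinset, w e)
    (u v : V) (p : S.Walk u v) (hp : p.IsPath) :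
    ∀ q : G.Walk u v, ∀ c : ℝ, (∀ f ∈ q.edges, c ≤ w f) → ∀ f ∈ p.edges, c ≤ w f := by
  intro q c hq f hfp
  obtain ⟨a, b⟩ := f
  by_contra! hlight
  have hab : S.Adj a b := p.adj_of_mem_edges hfp
  have hbridge : S.IsBridge s(a, b) := isAcyclic_iff_forall_adj_isBridge.mp hS.isAcyclic hab
  obtain ⟨x, y, hxyq, hx, hy⟩ := q.exists_mem_edges_of_iff_not
    (hp.isTrail.reachable_deleteEdges_iff_not_reachable hbridge hfp)
  have hy' : (S.deleteEdges {s(a, b)}).Reachable b y :=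
    ((hS.connected.preconnected a y).deleteEdges_left_or_right).resolve_left hy
  have hxy : G.Adj x y := q.adj_of_mem_edges hxyq
  have hTG : S.deleteEdges {s(a, b)} ⊔ edge x y ≤ G :=
    sup_le ((deleteEdges_le _).trans hSG) ((edge_le_iff _).mpr (.inr hxy))
  have hexchange : ∑ e ∈ (S.deleteEdges {s(a, b)} ⊔ edge x y).edgeFinset, w e ≤
      ∑ e ∈ S.edgeFinset, w e := by
    -- `hmax` carries the classical `Fintype` instance on edge sets, not the synthesized one
    convert hmax _ hTG (hS.deleteEdges_sup_edge_s15 hab hx hy')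
  rw [sum_edgeFinset_deleteEdges_sup_edge_s15 w hab hxy.ne
    fun h => hy (hx.trans h.reachable)] at hexchange
  linarith [hq _ hxyq]

/-- The unique path between two vertices in a maximum-weight spanning tree achieves
the maximum, over all paths in `G` between them, of the minimum edge weight along the
path: its bottleneck is at least the bottleneck of any walk in `G`. -/
theorem maximal_spanningTree_bottleneck {V : Type*} [Fintype V] (G S : SimpleGraph V)
    (w : Sym2 V → ℝ) (hG : G.Connected) (hSG : S ≤ G) (hS : S.IsTree)
    (hmax : ∀ T : SimpleGraph V, T ≤ G → T.IsTree →
        ∑ e ∈ T.edgeFinset, w e ≤ ∑ e ∈ S.edgeFinset, w e)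
    (u v : V) (p : S.Walk u v) (hp : p.IsPath) :
    ∀ q : G.Walk u v, ∀ c : ℝ, (∀ f ∈ q.edges, c ≤ w f) → ∀ f ∈ p.edges, c ≤ w f :=
  maximal_spanningTree_bottleneck_general G S w hSG hS hmax u v p hp
end
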